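/- Let n = 2k with k ≥ 1. Let c be an invertible symmetric n×n real matrix, a an arbitrary n×n real matrix, x a symmetric n×n real matrix, and g ∈ GL(n,ℝ) with det g > 0. Put (c', a') = Ad*(x,g)(c,a) = ((gᵀ)⁻¹ c g⁻¹, g a g⁻¹ + x (gᵀ)⁻¹ c g⁻¹). Then det( ½ ( a' c'⁻¹ − (a' c'⁻¹)ᵀ ) ) · det(c') = det( ½ ( a c⁻¹ − (a c⁻¹)ᵀ ) ) · det(c), i.e. the function π(a c⁻¹)² det(c) (the square of the Pfaffian invariant π(a c⁻¹) det(c)^{1/2}) is invariant under the coadjoint action. -/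

import Mathlib

/-!
Put `c' = ǧ c g⁻¹`. Then `c'⁻¹ = g c⁻¹ gᵀ`, so `a' c'⁻¹ = g (a c⁻¹) gᵀ + x`. The symmetric
summand `x` drops out of the skew part, which is therefore congruent to the skew part of
`a c⁻¹` via `g`; its determinant gains the factor `(det g)²`, exactly compensated by
`det c' = det c / (det g)²`.
-/

namespace Matrix

variable {n R : Type*} [CommRing R]

theorem add_sub_transpose_add_of_isSymm (A x : Matrix n n R) (hx : x.IsSymm) :
    A + x - (A + x)ᵀ = A - Aᵀ := by
  rw [transpose_add, hx.eq]
  abel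

variable [Fintype n]

theorem smul_sub_transpose_congr (r : R) (A g : Matrix n n R) :
    r • (g * A * gᵀ - (g * A * gᵀ)ᵀ) = g * (r • (A - Aᵀ)) * gᵀ := by
  rw [transpose_mul, transpose_mul, transpose_transpose, Matrix.mul_smul, Matrix.smul_mul,
    Matrix.mul_sub, Matrix.sub_mul, Matrix.mul_assoc g A, Matrix.mul_assoc g Aᵀ]

variable [DecidableEq n]

theorem inv_transpose_inv_mul_mul_inv (g c : Matrix n n R) (hg : IsUnit g.det) :
    ((gᵀ)⁻¹ * c * g⁻¹)⁻¹ = g * c⁻¹ * gᵀ := by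
  have hgt : IsUnit gᵀ.det := by rwa [det_transpose]
  rw [mul_inv_rev, mul_inv_rev, nonsing_inv_nonsing_inv g hg,
    nonsing_inv_nonsing_inv gᵀ hgt, Matrix.mul_assoc]

theorem coadjoint_mul_inv (a c x g : Matrix n n R) (hc : IsUnit c.det) (hg : IsUnit g.det) :
    (g * a * g⁻¹ + x * ((gᵀ)⁻¹ * c * g⁻¹)) * ((gᵀ)⁻¹ * c * g⁻¹)⁻¹ =
      g * (a * c⁻¹) * gᵀ + x := by
  have hgt : IsUnit gᵀ.det := by rwa [det_transpose]
  rw [inv_transpose_inv_mul_mul_inv g c hg, add_mul]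
  congr 1
  · simp only [Matrix.mul_assoc, nonsing_inv_mul_cancel_left _ _ hg]
  · simp only [Matrix.mul_assoc, nonsing_inv_mul_cancel_left _ _ hg,
      mul_nonsing_inv_cancel_left _ _ hc, nonsing_inv_mul _ hgt, Matrix.mul_one]

theorem det_congr_mul_det_inv_congr (S c g : Matrix n n R) (hg : IsUnit g.det) :
    (g * S * gᵀ).det * ((gᵀ)⁻¹ * c * g⁻¹).det = S.det * c.det := by
  simp only [det_mul, det_transpose, det_nonsing_inv]
  have hinv : g.det * Ring.inverse g.det = 1 := Ring.mul_inverse_cancel _ hg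
  linear_combination (S.det * c.det * (g.det * Ring.inverse g.det + 1)) * hinv

end Matrix

open Matrix

theorem pfaffian_square_invariant_general (k : ℕ)
    (c a x g : Matrix (Fin (2 * k)) (Fin (2 * k)) ℝ)
    (hcu : IsUnit c.det) (hx : x.IsSymm) (hg : 0 < g.det) :
    ((1 / 2 : ℝ) •
        ((g * a * g⁻¹ + x * ((gᵀ)⁻¹ * c * g⁻¹)) * ((gᵀ)⁻¹ * c * g⁻¹)⁻¹ -
          ((g * a * g⁻¹ + x * ((gᵀ)⁻¹ * c * g⁻¹)) * ((gᵀ)⁻¹ * c * g⁻¹)⁻¹)ᵀ)).det *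
      ((gᵀ)⁻¹ * c * g⁻¹).det =
    ((1 / 2 : ℝ) • (a * c⁻¹ - (a * c⁻¹)ᵀ)).det * c.det := by
  have hgu : IsUnit g.det := hg.ne'.isUnit
  rw [coadjoint_mul_inv a c x g hcu hgu, add_sub_transpose_add_of_isSymm _ x hx,
    smul_sub_transpose_congr, det_congr_mul_det_inv_congr _ c g hgu]

theorem pfaffian_square_invariant (k : ℕ) (hk : 1 ≤ k)
    (c a x g : Matrix (Fin (2 * k)) (Fin (2 * k)) ℝ)
    (hc : c.IsSymm) (hcu : IsUnit c.det) (hx : x.IsSymm) (hg : 0 < g.det) :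
    ((1 / 2 : ℝ) •
        ((g * a * g⁻¹ + x * ((gᵀ)⁻¹ * c * g⁻¹)) * ((gᵀ)⁻¹ * c * g⁻¹)⁻¹ -
          ((g * a * g⁻¹ + x * ((gᵀ)⁻¹ * c * g⁻¹)) * ((gᵀ)⁻¹ * c * g⁻¹)⁻¹)ᵀ)).det *
      ((gᵀ)⁻¹ * c * g⁻¹).det =
    ((1 / 2 : ℝ) • (a * c⁻¹ - (a * c⁻¹)ᵀ)).det * c.det :=
  pfaffian_square_invariant_general k c a x g hcu hx hg
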